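/- Let f ∈ L¹(𝕋), r ∈ ℕ, ϱ ∈ [0,1), x ∈ 𝕋. Then A_{ϱ,r}(f)(x) = ∑_{k=0}^{r-1} (∂^k f(ϱ,x)/∂ϱ^k) · (1-ϱ)^k / k!, where f(ϱ,x) is the Poisson integral of f. -/

import Mathlib

open MeasureTheory Real AddCircle
open scoped ENNReal

noncomputable section

instance : Fact (0 < 2 * π) := ⟨by positivity⟩

/-- The Taylor–Abel–Poisson multipliers `λ_{k,r}(ϱ)`. -/
def lam (r k : ℕ) (ρ : ℝ) : ℝ :=
  if k < r then 1 else ∑ j ∈ Finset.range r, (k.choose j : ℝ) * (1 - ρ) ^ j * ρ ^ (k - j)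

/-- The Poisson integral `f(ϱ,x) = ∑_{k∈ℤ} ϱ^{|k|} f̂_k e^{ikx}`. -/
def poissonIntegral (f : AddCircle (2 * π) → ℂ) (ρ : ℝ) (x : AddCircle (2 * π)) : ℂ :=
  ∑' k : ℤ, ((ρ ^ k.natAbs : ℝ) : ℂ) * fourierCoeff f k * fourier k x

/-- `∂^r f(ϱ,x)/∂ϱ^r`, the `r`-th derivative of the Poisson integral in the radial variable. -/
def pderivR (r : ℕ) (f : AddCircle (2 * π) → ℂ) (ρ : ℝ) (x : AddCircle (2 * π)) : ℂ :=
  iteratedDeriv r (fun t : ℝ => poissonIntegral f t x) ρ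

/-- The Taylor–Abel–Poisson mean `A_{ϱ,r}(f)`. -/
def ATAP (r : ℕ) (ρ : ℝ) (f : AddCircle (2 * π) → ℂ) (x : AddCircle (2 * π)) : ℂ :=
  ∑' k : ℤ, ((lam r k.natAbs ρ : ℝ) : ℂ) * fourierCoeff f k * fourier k x

/-- `g` is the radial derivative of order `n` of `f`:  `ĝ_k = (|k|!/(|k|-n)!) f̂_k` for
`|k| ≥ n` and `ĝ_k = 0` otherwise. -/
def HasRadialDeriv (f g : AddCircle (2 * π) → ℂ) (n : ℕ) : Prop :=
  Integrable g haarAddCircle ∧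
  ∀ k : ℤ, fourierCoeff g k =
    if n ≤ k.natAbs then ((k.natAbs.descFactorial n : ℕ) : ℂ) * fourierCoeff f k else 0

/-- `M_p(ϱ,f,r) = ϱ^r ‖∂^r f(ϱ,·)/∂ϱ^r‖_p`. -/
def Mp (p : ℝ≥0∞) (ρ : ℝ) (f : AddCircle (2 * π) → ℂ) (r : ℕ) : ℝ≥0∞ :=
  ENNReal.ofReal (ρ ^ r) * eLpNorm (fun x => pderivR r f ρ x) p haarAddCircle

/-- The K-functional `K_n(δ,f)_p` generated by the radial derivative of order `n`. -/
def Kfun (n : ℕ) (δ : ℝ) (f : AddCircle (2 * π) → ℂ) (p : ℝ≥0∞) : ℝ≥0∞ :=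
  ⨅ (h : AddCircle (2 * π) → ℂ) (g : AddCircle (2 * π) → ℂ)
    (_ : MemLp g p haarAddCircle) (_ : HasRadialDeriv h g n),
    eLpNorm (f - h) p haarAddCircle + ENNReal.ofReal (δ ^ n) * eLpNorm g p haarAddCircle

/-! Put `cₖ = f̂ₖ e^{ikx}`. The Poisson integral is the series `∑ₖ ϱ^{|k|} cₖ` with bounded
coefficients, so on `(-1, 1)` it can be differentiated term by term, its `j`-th derivative being
`∑ₖ |k|(|k|-1)⋯(|k|-j+1) ϱ^{|k|-j} cₖ`. The right-hand side therefore equals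
`∑ₖ (∑_{j<r} C(|k|,j) (1-ϱ)^j ϱ^{|k|-j}) cₖ`, and the inner sum is `λ_{|k|,r}(ϱ)`: for `|k| ≥ r`
this is the definition, for `|k| < r` it is the full binomial expansion of `((1-ϱ)+ϱ)^{|k|} = 1`. -/

lemma lam_eq_sum_choose (r m : ℕ) (ρ : ℝ) :
    lam r m ρ = ∑ j ∈ Finset.range r, (m.choose j : ℝ) * (1 - ρ) ^ j * ρ ^ (m - j) := by
  rw [lam, ite_eq_right_iff]
  intro hmr
  rw [← Finset.sum_subset (Finset.range_subset_range.2 hmr) fun j _ hj => ?_]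
  · calc (1 : ℝ) = ((1 - ρ) + ρ) ^ m := by simp
      _ = _ := by
        rw [add_pow]
        exact Finset.sum_congr rfl fun j _ => by ring
  · simp [Nat.choose_eq_zero_of_lt (by simpa using hj : m < j)]

lemma lam_eq_sum_descFactorial (r m : ℕ) (ρ : ℝ) :
    lam r m ρ = ∑ j ∈ Finset.range r,
      ((1 - ρ) ^ j / j.factorial) * ((m.descFactorial j : ℝ) * ρ ^ (m - j)) := by
  rw [lam_eq_sum_choose]
  refine Finset.sum_congr rfl fun j _ => ?_
  rw [Nat.descFactorial_eq_factorial_mul_choose]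
  field_simp
  push_cast
  ring

section TermwiseDeriv

variable {E : Type*} [NormedAddCommGroup E] [NormedSpace ℝ E]

lemma summable_descFactorial_mul_pow (j : ℕ) {b : ℝ} (hb : ‖b‖ < 1) :
    Summable fun n : ℕ => (n.descFactorial j : ℝ) * b ^ (n - j) := by
  rw [← summable_nat_add_iff j]
  simpa using summable_descFactorial_mul_geometric_of_norm_lt_one j hb

lemma summable_descFactorial_mul_pow_natAbs (j : ℕ) {b : ℝ} (hb : ‖b‖ < 1) :
    Summable fun k : ℤ => (k.natAbs.descFactorial j : ℝ) * b ^ (k.natAbs - j) :=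
  .of_nat_of_neg (by simpa using summable_descFactorial_mul_pow j hb)
    (by simpa using summable_descFactorial_mul_pow j hb)

/-- The series `∑ₖ s^{|k|} cₖ` differentiated `j` times term by term. -/
def termwiseDeriv (c : ℤ → E) (j : ℕ) (s : ℝ) : E :=
  ∑' k : ℤ, ((k.natAbs.descFactorial j : ℝ) * s ^ (k.natAbs - j)) • c k

variable {c : ℤ → E} {M : ℝ}

lemma norm_descFactorial_mul_pow_smul_le (hc : ∀ k, ‖c k‖ ≤ M) (j : ℕ) (k : ℤ) {s b : ℝ}
    (hsb : ‖s‖ ≤ b) :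
    ‖((k.natAbs.descFactorial j : ℝ) * s ^ (k.natAbs - j)) • c k‖
      ≤ M * ((k.natAbs.descFactorial j : ℝ) * b ^ (k.natAbs - j)) := by
  rw [norm_smul, norm_mul, norm_pow, Real.norm_natCast, mul_comm M]
  have hb : 0 ≤ b := (norm_nonneg s).trans hsb
  gcongr
  exact hc k

variable [CompleteSpace E]

lemma summable_descFactorial_mul_pow_natAbs_smul (hc : ∀ k, ‖c k‖ ≤ M) (j : ℕ) {s : ℝ}
    (hs : ‖s‖ < 1) :
    Summable fun k : ℤ => ((k.natAbs.descFactorial j : ℝ) * s ^ (k.natAbs - j)) • c k :=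
  .of_norm_bounded ((summable_descFactorial_mul_pow_natAbs j (by rwa [norm_norm])).mul_left M)
    fun k => norm_descFactorial_mul_pow_smul_le hc j k le_rfl

lemma hasDerivAt_termwiseDeriv (hc : ∀ k, ‖c k‖ ≤ M) (j : ℕ) {t : ℝ} (ht : ‖t‖ < 1) :
    HasDerivAt (termwiseDeriv c j) (termwiseDeriv c (j + 1) t) t := by
  obtain ⟨b, htb, hb⟩ := exists_between ht
  have hb' : ‖b‖ < 1 := by rwa [Real.norm_of_nonneg ((norm_nonneg t).trans htb.le)]
  have hball : ∀ {y : ℝ}, y ∈ Metric.ball 0 b → ‖y‖ ≤ b := fun hy => by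
    simpa using (Metric.mem_ball.1 hy).le
  refine hasDerivAt_tsum_of_isPreconnected
    ((summable_descFactorial_mul_pow_natAbs (j + 1) hb').mul_left M) Metric.isOpen_ball
    (convex_ball 0 b).isPreconnected (fun k y _ => ?_)
    (fun k y hy => norm_descFactorial_mul_pow_smul_le hc (j + 1) k (hball hy))
    (by simpa using htb) (summable_descFactorial_mul_pow_natAbs_smul hc j ht) (by simpa using htb)
  convert ((hasDerivAt_pow (k.natAbs - j) y).const_mul
    (k.natAbs.descFactorial j : ℝ)).smul_const (c k) using 2
  rw [Nat.descFactorial_succ, ← Nat.sub_sub]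
  push_cast
  ring

theorem iteratedDeriv_tsum_pow_natAbs_smul (hc : ∀ k, ‖c k‖ ≤ M) (j : ℕ) {t : ℝ}
    (ht : ‖t‖ < 1) :
    iteratedDeriv j (fun s : ℝ => ∑' k : ℤ, s ^ k.natAbs • c k) t = termwiseDeriv c j t := by
  induction j generalizing t with
  | zero => simp [termwiseDeriv]
  | succ j ih =>
    have hnhds : iteratedDeriv j (fun s : ℝ => ∑' k : ℤ, s ^ k.natAbs • c k)
        =ᶠ[nhds t] termwiseDeriv c j := by
      filter_upwards [(isOpen_lt continuous_norm continuous_const).mem_nhds ht] with y hy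
      exact ih hy
    rw [iteratedDeriv_succ, hnhds.deriv_eq, (hasDerivAt_termwiseDeriv hc j ht).deriv]

theorem tsum_lam_smul_eq_sum_termwiseDeriv (hc : ∀ k, ‖c k‖ ≤ M) (r : ℕ) {t : ℝ}
    (ht : ‖t‖ < 1) :
    ∑' k : ℤ, lam r k.natAbs t • c k
      = ∑ j ∈ Finset.range r, ((1 - t) ^ j / j.factorial) • termwiseDeriv c j t := by
  simp_rw [termwiseDeriv, ← tsum_const_smul'']
  rw [← Summable.tsum_finsetSum fun j _ =>
    (summable_descFactorial_mul_pow_natAbs_smul hc j ht).const_smul _]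
  refine tsum_congr fun k => ?_
  rw [lam_eq_sum_descFactorial, Finset.sum_smul]
  simp_rw [smul_smul]

end TermwiseDeriv

lemma norm_fourierCoeff_le {T : ℝ} [Fact (0 < T)] {E : Type*} [NormedAddCommGroup E]
    [NormedSpace ℂ E] (f : AddCircle T → E) (n : ℤ) :
    ‖fourierCoeff f n‖ ≤ ∫ t, ‖f t‖ ∂haarAddCircle := by
  rw [fourierCoeff]
  refine (norm_integral_le_integral_norm _).trans_eq ?_
  simp_rw [norm_smul, fourier_apply, Circle.norm_coe, one_mul]

lemma norm_fourierCoeff_mul_fourier_le (f : AddCircle (2 * π) → ℂ) (x : AddCircle (2 * π))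
    (k : ℤ) : ‖fourierCoeff f k * fourier k x‖ ≤ ∫ t, ‖f t‖ ∂haarAddCircle := by
  simpa [Circle.norm_coe] using norm_fourierCoeff_le f k

lemma pderivR_eq_termwiseDeriv (f : AddCircle (2 * π) → ℂ) (j : ℕ) {ρ : ℝ} (hρ : ‖ρ‖ < 1)
    (x : AddCircle (2 * π)) :
    pderivR j f ρ x = termwiseDeriv (fun k => fourierCoeff f k * fourier k x) j ρ := by
  rw [pderivR, ← iteratedDeriv_tsum_pow_natAbs_smul (norm_fourierCoeff_mul_fourier_le f x) j hρ]
  congr 1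
  ext s
  exact tsum_congr fun k => by rw [Complex.real_smul, Complex.ofReal_pow, mul_assoc]

lemma ATAP_eq_tsum_lam_smul (r : ℕ) (ρ : ℝ) (f : AddCircle (2 * π) → ℂ)
    (x : AddCircle (2 * π)) :
    ATAP r ρ f x = ∑' k : ℤ, lam r k.natAbs ρ • (fourierCoeff f k * fourier k x) :=
  tsum_congr fun k => by rw [Complex.real_smul, mul_assoc]

theorem ATAP_eq_taylor_general (f : AddCircle (2 * π) → ℂ)
    (r : ℕ) (ρ : ℝ) (hρ : ρ ∈ Set.Ico (0 : ℝ) 1) (x : AddCircle (2 * π)) :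
    ATAP r ρ f x
      = ∑ k ∈ Finset.range r,
          pderivR k f ρ x * (((1 - ρ) ^ k / (k.factorial : ℝ) : ℝ) : ℂ) := by
  have hρ1 : ‖ρ‖ < 1 := by rw [Real.norm_of_nonneg hρ.1]; exact hρ.2
  rw [ATAP_eq_tsum_lam_smul, tsum_lam_smul_eq_sum_termwiseDeriv
    (norm_fourierCoeff_mul_fourier_le f x) r hρ1]
  refine Finset.sum_congr rfl fun j _ => ?_
  rw [pderivR_eq_termwiseDeriv f j hρ1, Complex.real_smul, mul_comm]

/-- Lemma 1: For `f ∈ L¹(𝕋)`, `r ∈ ℕ`, `ϱ ∈ [0,1)`, `x ∈ 𝕋`: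
`A_{ϱ,r}(f)(x) = ∑_{k=0}^{r-1} (∂^k f(ϱ,x)/∂ϱ^k)·(1-ϱ)^k/k!`. -/
theorem ATAP_eq_taylor (f : AddCircle (2 * π) → ℂ) (hf : Integrable f haarAddCircle)
    (r : ℕ) (hr : 1 ≤ r) (ρ : ℝ) (hρ : ρ ∈ Set.Ico (0 : ℝ) 1) (x : AddCircle (2 * π)) :
    ATAP r ρ f x
      = ∑ k ∈ Finset.range r,
          pderivR k f ρ x * (((1 - ρ) ^ k / (k.factorial : ℝ) : ℝ) : ℂ) :=
  ATAP_eq_taylor_general f r ρ hρ x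

end
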